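/- arXiv:1203.6610 — 2 statements merged into one kernel-verified Lean document; each statement's English description precedes it below -/
import Mathlib

section
/- Suppose |B| ≥ 2 and |S| ≥ 2. Let π̂ be a single-seller partition that is revenue-maximizing and satisfies SW(π̂) ≥ SW(π') for every revenue-maximizing partition π'. Then for every seller profile τ and every buyer assignment σ in the |S|-seller game, |S|·SW(τ,σ) ≤ min(|S|,|B|)·SW(π̂); in particular SW(τ,σ) ≤ SW(π̂), so competition cannot yield higher welfare than such a monopolist. -/
open Finset

variable {B G S : Type*} [Fintype B] [Fintype G] [Fintype S]
variable [DecidableEq B] [DecidableEq G] [DecidableEq S]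

/-- `v_b(Ḡ)`: buyer `b`'s total valuation of the variants in `Ḡ`. -/
def vsum (v : B → G → ℕ) (b : B) (Gb : Finset G) : ℕ := ∑ g ∈ Gb, v b g

/-- `V̄1(B̄,Ḡ)`: the largest value among `(v_b(Ḡ))_{b∈B̄}` (`0` if `B̄ = ∅`). -/
def V1 (v : B → G → ℕ) (Bb : Finset B) (Gb : Finset G) : ℕ :=
  Bb.sup (fun b => vsum v b Gb)

/-- `V̄2(B̄,Ḡ)`: the second-largest value, counted with multiplicity
(`0` if `|B̄| ≤ 1`).  It equals the minimum, over removal of one buyer,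
of the maximum over the remaining buyers. -/
def V2 (v : B → G → ℕ) (Bb : Finset B) (Gb : Finset G) : ℕ :=
  if h : Bb.Nonempty then Bb.inf' h (fun b => V1 v (Bb.erase b) Gb) else 0

/-- The set of buyers choosing seller `s` under the assignment `σ`. -/
def buyersOf (σ : B → S) (s : S) : Finset B := univ.filter (fun b => σ b = s)

/-- Buyer `b`'s utility in the multi-seller game. -/
def ubuyer (v : B → G → ℕ) (τ : S → Finpartition (univ : Finset G)) (σ : B → S) (b : B) : ℚ :=
  (Fintype.card G : ℚ)⁻¹ *
    ∑ Gb ∈ (τ (σ b)).parts, max ((vsum v b Gb : ℚ) - (V2 v (buyersOf σ (σ b)) Gb : ℚ)) 0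

/-- Seller `s`'s utility in the multi-seller game. -/
def useller (v : B → G → ℕ) (τ : S → Finpartition (univ : Finset G)) (σ : B → S) (s : S) : ℚ :=
  (Fintype.card G : ℚ)⁻¹ * ∑ Gb ∈ (τ s).parts, (V2 v (buyersOf σ s) Gb : ℚ)

/-- Social welfare in the multi-seller game. -/
def SWm (v : B → G → ℕ) (τ : S → Finpartition (univ : Finset G)) (σ : B → S) : ℚ :=
  ((Fintype.card S : ℚ) * (Fintype.card G : ℚ))⁻¹ *
    ∑ s : S, ∑ Gb ∈ (τ s).parts, (V1 v (buyersOf σ s) Gb : ℚ)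

/-- Social welfare in the single-seller (monopoly) game. -/
def SW1 (v : B → G → ℕ) (π : Finpartition (univ : Finset G)) : ℚ :=
  (Fintype.card G : ℚ)⁻¹ * ∑ Gb ∈ π.parts, (V1 v (univ : Finset B) Gb : ℚ)

/-- The monopolist's revenue. -/
def rev1 (v : B → G → ℕ) (π : Finpartition (univ : Finset G)) : ℚ :=
  (Fintype.card G : ℚ)⁻¹ * ∑ Gb ∈ π.parts, (V2 v (univ : Finset B) Gb : ℚ)

/-- Buyer `b`'s utility in the monopoly game. -/
def ub1 (v : B → G → ℕ) (π : Finpartition (univ : Finset G)) (b : B) : ℚ :=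
  (Fintype.card G : ℚ)⁻¹ *
    ∑ Gb ∈ π.parts, max ((vsum v b Gb : ℚ) - (V2 v (univ : Finset B) Gb : ℚ)) 0

/-- `π` refines `π̂`: every block of `π̂` is a union of blocks of `π`. -/
def IsRefinement (π πhat : Finpartition (univ : Finset G)) : Prop :=
  ∀ t ∈ πhat.parts, ∃ P ⊆ π.parts, t = P.sup id

/-- `σ` is a (pure) Nash equilibrium of the buyers' subgame induced by `τ`. -/
def IsNash (v : B → G → ℕ) (τ : S → Finpartition (univ : Finset G)) (σ : B → S) : Prop :=
  ∀ (b : B) (s : S), ubuyer v τ (Function.update σ b s) b ≤ ubuyer v τ σ b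

/-- `p^i(G)`: the number of goods demanded by at least `i` buyers. -/
def pdem (v : B → G → ℕ) (i : ℕ) : ℕ :=
  (univ.filter (fun g : G => i ≤ ∑ b : B, v b g)).card

/-- The trivial (indiscrete) partition `{G}`, which discloses nothing. -/
def trivPart (G : Type*) [Fintype G] [DecidableEq G] [Nonempty G] :
    Finpartition (univ : Finset G) :=
  Finpartition.indiscrete Finset.univ_nonempty.ne_empty

/-- `(π, f)` is a pure subgame perfect equilibrium of the two-stage game. -/
def IsSPE (v : B → G → ℕ) (π : S → Finpartition (univ : Finset G))
    (f : (S → Finpartition (univ : Finset G)) → (B → S)) : Prop :=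
  (∀ τ, IsNash v τ (f τ)) ∧
  ∀ (s : S) (ρ : Finpartition (univ : Finset G)),
    useller v (Function.update π s ρ) (f (Function.update π s ρ)) s ≤ useller v π (f π) s

/-!
A seller in the competitive game gains value only from goods demanded by one of its own buyers, so
a good demanded by `d` buyers contributes at most `min |S| d` to `|S|·|G|·SW(τ,σ)`. Writing `pⁱ` for
the number of goods demanded by at least `i` buyers and `m = min |S| |B|`, this gives
`|S|·|G|·SW(τ,σ) ≤ m·p² + (p¹ - p²)`.

For a monopoly partition `π`, `|G|·u_s(π)` is at most `(p¹ + p²)/2`, and at most `p¹` minus the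
number of goods that a given buyer alone demands. Selling every good demanded by two or more buyers
on its own and greedily pairing singly demanded goods of distinct buyers attains one of these
bounds, so this partition maximizes revenue, and its `|G|·SW` is at least `(p¹ + p²)/2`. As `m ≥ 2`,
`m·(p¹ + p²)/2 ≥ m·p² + (p¹ - p²)`, and the welfare-best revenue maximizer `π̂` does at least as
well.
-/

set_option linter.unusedSectionVars false

namespace Finpartition

variable {α : Type*} [DecidableEq α] {s t : Finset α}

lemma sum_sum_parts {M : Type*} [AddCommMonoid M] (P : Finpartition s) (f : α → M) :
    ∑ T ∈ P.parts, ∑ a ∈ T, f a = ∑ a ∈ s, f a := by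
  conv_rhs => rw [← P.biUnion_parts]
  exact (sum_biUnion P.supIndep.pairwiseDisjoint).symm

lemma sum_bot_parts {M : Type*} [AddCommMonoid M] (s : Finset α) (F : Finset α → M) :
    ∑ T ∈ (⊥ : Finpartition s).parts, F T = ∑ a ∈ s, F {a} := by
  rw [parts_bot, sum_map]
  rfl

def union (P : Finpartition s) (Q : Finpartition t) (h : Disjoint s t) :
    Finpartition (s ∪ t) where
  parts := P.parts ∪ Q.parts
  supIndep := by
    rw [supIndep_iff_pairwiseDisjoint, coe_union, Set.pairwiseDisjoint_union]
    exact ⟨P.disjoint, Q.disjoint, fun _ hx _ hy _ => h.mono (P.le hx) (Q.le hy)⟩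
  sup_parts := by rw [sup_union, P.sup_parts, Q.sup_parts]; rfl
  bot_notMem := by simp

lemma sum_union_parts {M : Type*} [AddCommMonoid M] (P : Finpartition s) (Q : Finpartition t)
    (h : Disjoint s t) (F : Finset α → M) :
    ∑ T ∈ (P.union Q h).parts, F T = ∑ T ∈ P.parts, F T + ∑ T ∈ Q.parts, F T :=
  sum_union <| disjoint_left.2 fun _ hP hQ =>
    P.ne_bot hP (disjoint_self.1 (h.mono (P.le hP) (Q.le hQ)))

lemma sum_extendOfLE {M : Type*} [AddCommMonoid M] (P : Finpartition s) (hst : s ⊆ t)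
    {F : Finset α → M} (hF : F ∅ = 0) :
    ∑ T ∈ (P.extendOfLE hst).parts, F T = ∑ T ∈ P.parts, F T + F (t \ s) := by
  rcases hst.eq_or_ssubset with rfl | hlt
  · rw [P.parts_extendOfLE_of_eq rfl, sdiff_self, bot_eq_empty, hF, add_zero]
  · rw [parts_extendOfLE_of_lt _ hlt, sum_insert, add_comm]
    intro h
    obtain ⟨a, ha⟩ := P.nonempty_of_mem_parts h
    exact (mem_sdiff.1 ha).2 (P.le h ha)

end Finpartition

section MixedPairing

variable {α β : Type*} [DecidableEq α] [DecidableEq β] {f : α → β}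

def IsMixedPair (f : α → β) (T : Finset α) : Prop := ∃ x y, f x ≠ f y ∧ T = {x, y}

lemma IsMixedPair.card_eq_two {T : Finset α} (h : IsMixedPair f T) : #T = 2 := by
  obtain ⟨x, y, hxy, rfl⟩ := h
  exact card_pair (ne_of_apply_ne f hxy)

lemma card_eq_two_mul_card_parts {M : Finset α} {Q : Finpartition M}
    (hQ : ∀ T ∈ Q.parts, IsMixedPair f T) : #M = 2 * #Q.parts := by
  rw [← Q.sum_card_parts, sum_congr rfl fun T hT => (hQ T hT).card_eq_two, sum_const,
    smul_eq_mul, mul_comm]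

lemma card_filter_add_card_filter_add_card_filter_le (D : Finset α) {a b c : β}
    (hab : a ≠ b) (hac : a ≠ c) (hbc : b ≠ c) :
    #{x ∈ D | f x = a} + #{x ∈ D | f x = b} + #{x ∈ D | f x = c} ≤ #D := by
  have := sum_card_fiberwise_eq_card_filter D {a, b, c} f
  rw [sum_insert (by simp [hab, hac]), sum_pair hbc] at this
  have := card_filter_le D (fun x => f x ∈ ({a, b, c} : Finset β))
  omega

lemma exists_two_largest_fibers {D : Finset α} (hD : ∃ x ∈ D, ∃ y ∈ D, f x ≠ f y) :
    ∃ g₁ ∈ D, ∃ g₂ ∈ D, f g₁ ≠ f g₂ ∧ ∀ b, #{x ∈ D | f x = b} ≤ #{x ∈ D | f x = f g₁} ∧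
      (b ≠ f g₁ → #{x ∈ D | f x = b} ≤ #{x ∈ D | f x = f g₂}) := by
  obtain ⟨x, hx, y, hy, hxy⟩ := hD
  obtain ⟨g₁, hg₁, hmax₁⟩ := exists_max_image D (fun x => #{y ∈ D | f y = f x}) ⟨x, hx⟩
  obtain ⟨x₂, hx₂, hx₂g₁⟩ : ∃ x ∈ D, f x ≠ f g₁ := by
    by_cases h : f x = f g₁
    · exact ⟨y, hy, fun h' => hxy (h.trans h'.symm)⟩
    · exact ⟨x, hx, h⟩
  obtain ⟨g₂, hg₂, hmax₂⟩ := exists_max_image {x ∈ D | f x ≠ f g₁}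
    (fun x => #{y ∈ D | f y = f x}) ⟨x₂, mem_filter.2 ⟨hx₂, hx₂g₁⟩⟩
  refine ⟨g₁, hg₁, g₂, (mem_filter.1 hg₂).1, Ne.symm (mem_filter.1 hg₂).2, fun b => ?_⟩
  rcases (filter (f · = b) D).eq_empty_or_nonempty with h | ⟨x, hx⟩
  · simp [h]
  · obtain ⟨hxD, rfl⟩ := mem_filter.1 hx
    exact ⟨hmax₁ x hxD, fun hb => hmax₂ x (mem_filter.2 ⟨hxD, hb⟩)⟩

/-- Pairs are formed greedily, always from the two largest colour classes; what remains unpaired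
is a single colour class, and it has more than one element only if that class held a majority. -/
theorem exists_mixedPair_finpartition [Nonempty β] (f : α → β) (D : Finset α) :
    ∃ (M : Finset α) (Q : Finpartition M) (b₀ : β), M ⊆ D ∧ (∀ T ∈ Q.parts, IsMixedPair f T) ∧
      (∀ x ∈ D \ M, f x = b₀) ∧ (#D ≤ #M + 1 ∨ 2 * #D ≤ #M + 2 * #{x ∈ D | f x = b₀}) := by
  induction D using Finset.strongInduction with
  | H D ih =>
  by_cases hmono : ∃ b₀, ∀ x ∈ D, f x = b₀
  · obtain ⟨b₀, hb₀⟩ := hmono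
    refine ⟨∅, ⊥, b₀, empty_subset _, by simp, fun x hx => hb₀ x (mem_sdiff.1 hx).1, Or.inr ?_⟩
    rw [filter_true_of_mem hb₀]
    simp
  obtain ⟨g₁, hg₁, g₂, hg₂, hf₁₂, hmax⟩ := exists_two_largest_fibers <| by
    push Not at hmono
    obtain ⟨x, hx, -⟩ := hmono (Classical.arbitrary β)
    obtain ⟨y, hy, hxy⟩ := hmono (f x)
    exact ⟨x, hx, y, hy, Ne.symm hxy⟩
  have hg₁₂ : g₁ ≠ g₂ := ne_of_apply_ne f hf₁₂
  set D' := (D.erase g₁).erase g₂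
  have hD : D = insert g₁ (insert g₂ D') := by
    rw [insert_erase (mem_erase.2 ⟨hg₁₂.symm, hg₂⟩), insert_erase hg₁]
  have hg₁D' : g₁ ∉ D' := fun h => (mem_erase.1 (mem_of_mem_erase h)).1 rfl
  have hg₂D' : g₂ ∉ D' := fun h => (mem_erase.1 h).1 rfl
  obtain ⟨M', Q', b₀, hM'D', hQ', hU', hbound'⟩ :=
    ih D' ((erase_ssubset (mem_erase.2 ⟨hg₁₂.symm, hg₂⟩)).trans (erase_ssubset hg₁))
  have hdisj : Disjoint M' {g₁, g₂} := by
    simp only [disjoint_insert_right, disjoint_singleton_right]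
    exact ⟨fun h => hg₁D' (hM'D' h), fun h => hg₂D' (hM'D' h)⟩
  refine ⟨M' ∪ {g₁, g₂}, Q'.extend (by simp) hdisj rfl, b₀, ?_, ?_, ?_, ?_⟩
  · rw [hD]
    exact union_subset (hM'D'.trans ((subset_insert _ _).trans (subset_insert _ _)))
      (insert_subset_insert _ (singleton_subset_iff.2 (mem_insert_self _ _)))
  · simp only [Finpartition.extend_parts, forall_mem_insert]
    exact ⟨⟨g₁, g₂, hf₁₂, rfl⟩, hQ'⟩
  · intro x hx
    apply hU'
    rw [hD] at hx
    simp only [mem_sdiff, mem_union, mem_insert, mem_singleton, not_or] at hx ⊢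
    tauto
  have hcard_D : #D = #D' + 2 := by
    rw [hD, card_insert_of_notMem (by simp [hg₁₂, hg₁D']), card_insert_of_notMem hg₂D']
  have hcard_M : #(M' ∪ {g₁, g₂}) = #M' + 2 := by
    rw [card_union_of_disjoint hdisj, card_pair hg₁₂]
  have hcnt : #{x ∈ D | f x = b₀} =
      #{x ∈ D' | f x = b₀} + (if f g₁ = b₀ then 1 else 0) + (if f g₂ = b₀ then 1 else 0) := by
    rw [hD, filter_insert, filter_insert]
    split_ifs <;> simp_all
  have hU'card : #D' ≤ #M' + #{x ∈ D' | f x = b₀} := by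
    rw [← card_sdiff_add_card_eq_card hM'D', add_comm]
    exact Nat.add_le_add_left
      (card_le_card fun x hx => mem_filter.2 ⟨(mem_sdiff.1 hx).1, hU' x hx⟩) _
  rcases hbound' with h | h
  · omega
  by_cases h₁ : f g₁ = b₀
  · rw [hcnt, if_pos h₁]
    omega
  by_cases h₂ : f g₂ = b₀
  · rw [hcnt, if_neg h₁, if_pos h₂]
    omega
  -- `b₀` is at most the third largest colour, so it holds at most a third of `D`.
  have := card_filter_add_card_filter_add_card_filter_le (f := f) D (Ne.symm h₁) (Ne.symm h₂) hf₁₂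
  have := (hmax b₀).2 (Ne.symm h₁)
  have := (hmax (f g₂)).1
  rw [if_neg h₁, if_neg h₂] at hcnt
  omega

end MixedPairing

section Valuations

variable (v : B → G → ℕ)

def demanders (g : G) : Finset B := {b | v b g ≠ 0}

variable {v}

lemma mem_demanders {b : B} {g : G} : b ∈ demanders v g ↔ v b g ≠ 0 := by
  simp [demanders]

lemma one_le_card_demanders {b : B} {g : G} (hb : v b g ≠ 0) : 1 ≤ #(demanders v g) :=
  card_pos.2 ⟨b, mem_demanders.2 hb⟩

lemma two_le_card_demanders {b b' : B} {g : G} (hne : b ≠ b') (hb : v b g ≠ 0)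
    (hb' : v b' g ≠ 0) : 2 ≤ #(demanders v g) := by
  rw [← card_pair hne]
  exact card_le_card (by simp [insert_subset_iff, mem_demanders, hb, hb'])

lemma sum_eq_card_demanders (hv : ∀ b g, v b g ≤ 1) (g : G) :
    ∑ b, v b g = #(demanders v g) := by
  rw [demanders, card_filter]
  exact sum_congr rfl fun b _ => by have := hv b g; split_ifs <;> omega

lemma pdem_eq_sum (hv : ∀ b g, v b g ≤ 1) (i : ℕ) :
    pdem v i = ∑ g, if i ≤ #(demanders v g) then 1 else 0 := by
  simp only [pdem, card_filter, sum_eq_card_demanders hv]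

lemma vsum_le_V1 {Bb : Finset B} {b : B} (hb : b ∈ Bb) (T : Finset G) :
    vsum v b T ≤ V1 v Bb T :=
  le_sup (f := fun b => vsum v b T) hb

lemma V2_le_V1_erase {Bb : Finset B} {b : B} (hb : b ∈ Bb) (T : Finset G) :
    V2 v Bb T ≤ V1 v (Bb.erase b) T := by
  rw [V2, dif_pos ⟨b, hb⟩]
  exact inf'_le _ hb

lemma V2_le_V1 (Bb : Finset B) (T : Finset G) : V2 v Bb T ≤ V1 v Bb T := by
  rcases Bb.eq_empty_or_nonempty with rfl | ⟨b, hb⟩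
  · simp [V2]
  · exact (V2_le_V1_erase hb T).trans (sup_mono (erase_subset b Bb))

lemma V1_empty (Bb : Finset B) : V1 v Bb ∅ = 0 := by
  simp [V1, vsum]

lemma V2_empty (Bb : Finset B) : V2 v Bb ∅ = 0 :=
  Nat.le_zero.1 ((V2_le_V1 Bb ∅).trans_eq (V1_empty Bb))

lemma card_le_V1 {Bb : Finset B} {U T : Finset G} {b : B} (hb : b ∈ Bb) (hUT : U ⊆ T)
    (hU : ∀ g ∈ U, v b g ≠ 0) : #U ≤ V1 v Bb T :=
  calc #U = ∑ _ ∈ U, 1 := card_eq_sum_ones U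
    _ ≤ ∑ g ∈ U, v b g := sum_le_sum fun g hg => Nat.one_le_iff_ne_zero.2 (hU g hg)
    _ ≤ vsum v b T := sum_le_sum_of_subset hUT
    _ ≤ V1 v Bb T := vsum_le_V1 hb T

lemma one_le_V2_of_ne {Bb : Finset B} {T : Finset G} {b b' : B} {x y : G} (hb : b ∈ Bb)
    (hb' : b' ∈ Bb) (hne : b ≠ b') (hx : x ∈ T) (hy : y ∈ T) (hbx : v b x ≠ 0)
    (hb'y : v b' y ≠ 0) : 1 ≤ V2 v Bb T := by
  rw [V2, dif_pos ⟨b, hb⟩]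
  refine le_inf' _ _ fun c _ => ?_
  obtain ⟨d, hd, z, hz, hdz⟩ : ∃ d ∈ Bb.erase c, ∃ z ∈ T, v d z ≠ 0 := by
    by_cases hc : b = c
    · exact ⟨b', mem_erase.2 ⟨fun h => hne (hc.trans h.symm), hb'⟩, y, hy, hb'y⟩
    · exact ⟨b, mem_erase.2 ⟨hc, hb⟩, x, hx, hbx⟩
  simpa using card_le_V1 hd (singleton_subset_iff.2 hz) (by simpa using hdz)

lemma V1_le_sum (hv : ∀ b g, v b g ≤ 1) (Bb : Finset B) (T : Finset G) :
    V1 v Bb T ≤ ∑ g ∈ T, if ∃ b ∈ Bb, v b g ≠ 0 then 1 else 0 :=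
  Finset.sup_le fun b hb => sum_le_sum fun g _ => by
    split_ifs with h
    · exact hv b g
    · push Not at h
      exact (h b hb).le

lemma sum_V1_le (hv : ∀ b g, v b g ≤ 1) (Bb : Finset B) (π : Finpartition (univ : Finset G)) :
    ∑ T ∈ π.parts, V1 v Bb T ≤ #{g | ∃ b ∈ Bb, v b g ≠ 0} := by
  rw [card_filter, ← π.sum_sum_parts]
  exact sum_le_sum fun T _ => V1_le_sum hv Bb T

lemma V2_le_sum (hv : ∀ b g, v b g ≤ 1) (b₀ : B) (T : Finset G) :
    V2 v univ T ≤ ∑ g ∈ T, if ∃ b ≠ b₀, v b g ≠ 0 then 1 else 0 :=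
  (V2_le_V1_erase (mem_univ b₀) T).trans <| (V1_le_sum hv _ T).trans_eq <| by simp

lemma apply_add_ite_le_ite_add_ite (hv : ∀ b g, v b g ≤ 1) (b₁ : B) (g : G) :
    v b₁ g + (if ∃ b ≠ b₁, v b g ≠ 0 then 1 else 0) ≤
      (if 1 ≤ #(demanders v g) then 1 else 0) + if 2 ≤ #(demanders v g) then 1 else 0 := by
  have := hv b₁ g
  by_cases h : ∃ b ≠ b₁, v b g ≠ 0
  · obtain ⟨b, hb, hbg⟩ := h
    rw [if_pos ⟨b, hb, hbg⟩, if_pos (one_le_card_demanders hbg)]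
    by_cases hb₁ : v b₁ g = 0
    · split_ifs <;> omega
    · rw [if_pos (two_le_card_demanders hb hbg hb₁)]
      omega
  · rw [if_neg h]
    by_cases hb₁ : v b₁ g = 0
    · omega
    · rw [if_pos (one_le_card_demanders hb₁)]
      split_ifs <;> omega

lemma V1_add_V2_le [Nonempty B] (hv : ∀ b g, v b g ≤ 1) (T : Finset G) :
    V1 v univ T + V2 v univ T ≤
      ∑ g ∈ T, ((if 1 ≤ #(demanders v g) then 1 else 0) +
        if 2 ≤ #(demanders v g) then 1 else 0) := by
  obtain ⟨b₁, -, hb₁⟩ := exists_max_image univ (fun b => vsum v b T) univ_nonempty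
  have hV1 : V1 v univ T = vsum v b₁ T :=
    le_antisymm (Finset.sup_le fun b hb => hb₁ b hb) (vsum_le_V1 (mem_univ b₁) T)
  rw [hV1, vsum]
  refine (Nat.add_le_add_left (V2_le_sum hv b₁ T) _).trans ?_
  rw [← sum_add_distrib]
  exact sum_le_sum fun g _ => apply_add_ite_le_ite_add_ite hv b₁ g

end Valuations

section RevenueBounds

variable {v : B → G → ℕ}

lemma two_mul_sum_V2_le [Nonempty B] (hv : ∀ b g, v b g ≤ 1)
    (π : Finpartition (univ : Finset G)) :
    2 * ∑ T ∈ π.parts, V2 v univ T ≤ pdem v 1 + pdem v 2 := by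
  calc 2 * ∑ T ∈ π.parts, V2 v univ T ≤ ∑ T ∈ π.parts, (V1 v univ T + V2 v univ T) := by
        rw [mul_sum]
        exact sum_le_sum fun T _ => by have := V2_le_V1 (v := v) univ T; omega
    _ ≤ _ := sum_le_sum fun T _ => V1_add_V2_le hv T
    _ = pdem v 1 + pdem v 2 := by
        rw [π.sum_sum_parts, sum_add_distrib, pdem_eq_sum hv, pdem_eq_sum hv]

lemma sum_V2_add_card_le (hv : ∀ b g, v b g ≤ 1) (b₀ : B) (π : Finpartition (univ : Finset G)) :
    ∑ T ∈ π.parts, V2 v univ T + #{g | demanders v g = {b₀}} ≤ pdem v 1 := by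
  calc ∑ T ∈ π.parts, V2 v univ T + #{g | demanders v g = {b₀}}
      ≤ ∑ T ∈ π.parts, (∑ g ∈ T, if ∃ b ≠ b₀, v b g ≠ 0 then 1 else 0) +
          ∑ g, if demanders v g = {b₀} then 1 else 0 := by
        rw [card_filter]
        exact Nat.add_le_add_right (sum_le_sum fun T _ => V2_le_sum hv b₀ T) _
    _ = ∑ g, ((if ∃ b ≠ b₀, v b g ≠ 0 then 1 else 0) + if demanders v g = {b₀} then 1 else 0) := by
        rw [π.sum_sum_parts, sum_add_distrib]
    _ ≤ pdem v 1 := by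
        rw [pdem_eq_sum hv]
        refine sum_le_sum fun g _ => ?_
        by_cases h : ∃ b ≠ b₀, v b g ≠ 0
        · obtain ⟨b, hb, hbg⟩ := h
          have hne : demanders v g ≠ {b₀} := fun h =>
            hb (mem_singleton.1 (h ▸ mem_demanders.2 hbg))
          rw [if_pos ⟨b, hb, hbg⟩, if_neg hne, if_pos (one_le_card_demanders hbg)]
        · rw [if_neg h, zero_add]
          split_ifs <;> simp_all

end RevenueBounds

section Competition

variable {v : B → G → ℕ}

lemma sum_sum_V1_le (hv : ∀ b g, v b g ≤ 1) (τ : S → Finpartition (univ : Finset G)) (σ : B → S) :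
    ∑ s, ∑ T ∈ (τ s).parts, V1 v (buyersOf σ s) T ≤ ∑ g, #((demanders v g).image σ) := by
  calc ∑ s, ∑ T ∈ (τ s).parts, V1 v (buyersOf σ s) T
      ≤ ∑ s, ∑ g, if ∃ b ∈ buyersOf σ s, v b g ≠ 0 then 1 else 0 :=
        sum_le_sum fun s _ => (sum_V1_le hv _ (τ s)).trans_eq (card_filter _ _)
    _ = ∑ g, #((demanders v g).image σ) := by
        rw [sum_comm]
        refine sum_congr rfl fun g _ => ?_
        rw [← card_filter]
        congr 1
        ext s
        simp [buyersOf, mem_demanders, and_comm]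

lemma sum_sum_V1_add_pdem_le (hv : ∀ b g, v b g ≤ 1) (τ : S → Finpartition (univ : Finset G))
    (σ : B → S) :
    ∑ s, ∑ T ∈ (τ s).parts, V1 v (buyersOf σ s) T + pdem v 2 ≤
      min (Fintype.card S) (Fintype.card B) * pdem v 2 + pdem v 1 := by
  refine (Nat.add_le_add_right (sum_sum_V1_le hv τ σ) _).trans ?_
  rw [pdem_eq_sum hv, pdem_eq_sum hv, mul_sum, ← sum_add_distrib, ← sum_add_distrib]
  refine sum_le_sum fun g _ => ?_
  have h₁ : #((demanders v g).image σ) ≤ Fintype.card S := card_le_univ _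
  have h₂ : #((demanders v g).image σ) ≤ #(demanders v g) := card_image_le
  have h₃ : #(demanders v g) ≤ Fintype.card B := card_le_univ _
  split_ifs <;> omega

end Competition

section Monopoly

variable (v : B → G → ℕ)

def contestedGoods : Finset G := {g | 2 ≤ #(demanders v g)}

def exclusiveGoods : Finset G := {g | #(demanders v g) = 1}

noncomputable def owner [Nonempty B] (g : G) : B :=
  if h : #(demanders v g) = 1 then (card_eq_one.1 h).choose else Classical.arbitrary B

lemma disjoint_contestedGoods_exclusiveGoods : Disjoint (contestedGoods v) (exclusiveGoods v) :=
  disjoint_filter.2 fun _ _ h₂ h₁ => by omega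

def monopolyPartition {M : Finset G} (Q : Finpartition M) (hM : M ⊆ exclusiveGoods v) :
    Finpartition (univ : Finset G) :=
  ((⊥ : Finpartition (contestedGoods v)).union Q
    ((disjoint_contestedGoods_exclusiveGoods v).mono_right hM)).extendOfLE (subset_univ _)

variable {v}

lemma demanders_eq_singleton_owner [Nonempty B] {g : G} (hg : g ∈ exclusiveGoods v) :
    demanders v g = {owner v g} := by
  have h := (mem_filter.1 hg).2
  rw [owner, dif_pos h]
  exact (card_eq_one.1 h).choose_spec

lemma owner_demands [Nonempty B] {g : G} (hg : g ∈ exclusiveGoods v) : v (owner v g) g ≠ 0 :=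
  mem_demanders.1 (by rw [demanders_eq_singleton_owner hg]; exact mem_singleton_self _)

lemma card_filter_demanders_eq_singleton [Nonempty B] (b : B) :
    #{g | demanders v g = {b}} = #{g ∈ exclusiveGoods v | owner v g = b} := by
  congr 1
  ext g
  simp only [mem_filter, mem_univ, true_and]
  constructor
  · intro h
    have hg : g ∈ exclusiveGoods v := mem_filter.2 ⟨mem_univ g, by rw [h, card_singleton]⟩
    exact ⟨hg, singleton_injective ((demanders_eq_singleton_owner hg).symm.trans h)⟩
  · rintro ⟨hg, rfl⟩
    exact demanders_eq_singleton_owner hg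

lemma pdem_two_eq (hv : ∀ b g, v b g ≤ 1) : pdem v 2 = #(contestedGoods v) := by
  rw [pdem_eq_sum hv, contestedGoods, card_filter]

lemma pdem_one_eq (hv : ∀ b g, v b g ≤ 1) :
    pdem v 1 = #(contestedGoods v) + #(exclusiveGoods v) := by
  rw [pdem_eq_sum hv, contestedGoods, exclusiveGoods, card_filter, card_filter, ← sum_add_distrib]
  exact sum_congr rfl fun g _ => by split_ifs <;> omega

lemma one_le_V2_singleton {g : G} (hg : g ∈ contestedGoods v) : 1 ≤ V2 v univ {g} := by
  have hg₂ : 2 ≤ #(demanders v g) := (mem_filter.1 hg).2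
  obtain ⟨b, hb⟩ := card_pos.1 (by omega : 0 < #(demanders v g))
  obtain ⟨b', hb', hne⟩ := exists_mem_ne hg₂ b
  exact one_le_V2_of_ne (mem_univ b) (mem_univ b') hne.symm (mem_singleton_self g)
    (mem_singleton_self g) (mem_demanders.1 hb) (mem_demanders.1 hb')

lemma one_le_V2_of_isMixedPair [Nonempty B] {T : Finset G} (hT : IsMixedPair (owner v) T)
    (hTE : T ⊆ exclusiveGoods v) : 1 ≤ V2 v univ T := by
  obtain ⟨x, y, hxy, rfl⟩ := hT
  have hx : x ∈ ({x, y} : Finset G) := mem_insert_self x _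
  have hy : y ∈ ({x, y} : Finset G) := mem_insert_of_mem (mem_singleton_self y)
  exact one_le_V2_of_ne (mem_univ _) (mem_univ _) hxy hx hy (owner_demands (hTE hx))
    (owner_demands (hTE hy))

lemma sum_monopolyPartition {M : Finset G} (Q : Finpartition M) (hM : M ⊆ exclusiveGoods v)
    {F : Finset G → ℕ} (hF : F ∅ = 0) :
    ∑ T ∈ (monopolyPartition v Q hM).parts, F T =
      ∑ g ∈ contestedGoods v, F {g} + ∑ T ∈ Q.parts, F T + F (univ \ (contestedGoods v ∪ M)) := by
  rw [monopolyPartition, Finpartition.sum_extendOfLE _ _ hF, Finpartition.sum_union_parts,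
    Finpartition.sum_bot_parts]

theorem exists_revenue_max_two_mul_welfare_ge [Nonempty B] (hv : ∀ b g, v b g ≤ 1) :
    ∃ π : Finpartition (univ : Finset G),
      (∀ π' : Finpartition (univ : Finset G),
        ∑ T ∈ π'.parts, V2 v univ T ≤ ∑ T ∈ π.parts, V2 v univ T) ∧
      pdem v 1 + pdem v 2 ≤ 2 * ∑ T ∈ π.parts, V1 v univ T := by
  obtain ⟨M, Q, b₀, hME, hQ, hU, hbound⟩ :=
    exists_mixedPair_finpartition (owner v) (exclusiveGoods v)
  have hC₁ : ∀ g ∈ contestedGoods v, 1 ≤ V2 v univ {g} := fun g hg => one_le_V2_singleton hg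
  have hQ₁ : ∀ T ∈ Q.parts, 1 ≤ V2 v univ T := fun T hT =>
    one_le_V2_of_isMixedPair (hQ T hT) ((Q.le hT).trans hME)
  have hrev : #(contestedGoods v) + #Q.parts ≤
      ∑ T ∈ (monopolyPartition v Q hME).parts, V2 v univ T := by
    rw [sum_monopolyPartition Q hME (V2_empty univ), card_eq_sum_ones, card_eq_sum_ones Q.parts]
    exact le_add_right (add_le_add (sum_le_sum hC₁) (sum_le_sum hQ₁))
  have hwel : #(contestedGoods v) + #Q.parts + #(exclusiveGoods v \ M) ≤
      ∑ T ∈ (monopolyPartition v Q hME).parts, V1 v univ T := by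
    rw [sum_monopolyPartition Q hME (V1_empty univ), card_eq_sum_ones, card_eq_sum_ones Q.parts]
    refine add_le_add (add_le_add (sum_le_sum fun g hg => (hC₁ g hg).trans (V2_le_V1 univ _))
      (sum_le_sum fun T hT => (hQ₁ T hT).trans (V2_le_V1 univ T)))
      (card_le_V1 (mem_univ b₀) (fun g hg => ?_)
        (fun g hg => hU g hg ▸ owner_demands (mem_sdiff.1 hg).1))
    obtain ⟨hgE, hgM⟩ := mem_sdiff.1 hg
    simp [disjoint_right.1 (disjoint_contestedGoods_exclusiveGoods v) hgE, hgM]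
  have hE := card_sdiff_add_card_eq_card hME
  have hM := card_eq_two_mul_card_parts hQ
  have hp₁ := pdem_one_eq hv
  have hp₂ := pdem_two_eq hv
  refine ⟨monopolyPartition v Q hME, fun π' => ?_, by omega⟩
  have := two_mul_sum_V2_le hv π'
  have := sum_V2_add_card_le hv b₀ π'
  rw [card_filter_demanders_eq_singleton] at this
  omega

end Monopoly

section Welfare

variable {v : B → G → ℕ}

lemma pdem_two_le_pdem_one : pdem v 2 ≤ pdem v 1 :=
  card_le_card (monotone_filter_right _ fun _ _ => le_trans one_le_two)

lemma sum_sum_V1_le_min_mul (hv : ∀ b g, v b g ≤ 1) (hB : 2 ≤ Fintype.card B)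
    (hS : 2 ≤ Fintype.card S) (τ : S → Finpartition (univ : Finset G)) (σ : B → S)
    {π : Finpartition (univ : Finset G)}
    (hπ : pdem v 1 + pdem v 2 ≤ 2 * ∑ T ∈ π.parts, V1 v univ T) :
    ∑ s, ∑ T ∈ (τ s).parts, V1 v (buyersOf σ s) T ≤
      min (Fintype.card S) (Fintype.card B) * ∑ T ∈ π.parts, V1 v univ T := by
  have hN := sum_sum_V1_add_pdem_le hv τ σ
  have hp := pdem_two_le_pdem_one (v := v)
  have hm : 2 ≤ min (Fintype.card S) (Fintype.card B) := le_min hS hB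
  nlinarith

lemma rev1_le_rev1 {π π' : Finpartition (univ : Finset G)}
    (h : ∑ T ∈ π'.parts, V2 v univ T ≤ ∑ T ∈ π.parts, V2 v univ T) : rev1 v π' ≤ rev1 v π := by
  simp only [rev1, ← Nat.cast_sum]
  gcongr

lemma card_mul_SWm_le_mul_SW1 (hS : Fintype.card S ≠ 0) {τ : S → Finpartition (univ : Finset G)}
    {σ : B → S} {π : Finpartition (univ : Finset G)} {k : ℕ}
    (h : ∑ s, ∑ T ∈ (τ s).parts, V1 v (buyersOf σ s) T ≤ k * ∑ T ∈ π.parts, V1 v univ T) :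
    Fintype.card S * SWm v τ σ ≤ k * SW1 v π := by
  rw [SWm, SW1, mul_inv, ← mul_assoc, ← mul_assoc, mul_inv_cancel₀ (by exact_mod_cast hS),
    one_mul, mul_left_comm]
  gcongr
  exact_mod_cast h

end Welfare

theorem competition_no_gain_general [Nonempty B]
    (v : B → G → ℕ) (hv : ∀ b g, v b g ≤ 1)
    (hB : 2 ≤ Fintype.card B) (hS : 2 ≤ Fintype.card S)
    (πhat : Finpartition (univ : Finset G))
    (hbest : ∀ π' : Finpartition (univ : Finset G),
        (∀ π'' : Finpartition (univ : Finset G), rev1 v π'' ≤ rev1 v π') →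
        SW1 v π' ≤ SW1 v πhat)
    (τ : S → Finpartition (univ : Finset G)) (σ : B → S) :
    (Fintype.card S : ℚ) * SWm v τ σ ≤
        (min (Fintype.card S) (Fintype.card B) : ℚ) * SW1 v πhat ∧
      SWm v τ σ ≤ SW1 v πhat := by
  obtain ⟨π, hπrev, hπwel⟩ := exists_revenue_max_two_mul_welfare_ge hv
  have hπ : SW1 v π ≤ SW1 v πhat := hbest π fun π' => rev1_le_rev1 (hπrev π')
  have hS₀ : (0 : ℚ) < Fintype.card S := by exact_mod_cast (by omega : 0 < Fintype.card S)
  have hmain : (Fintype.card S : ℚ) * SWm v τ σ ≤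
      (min (Fintype.card S) (Fintype.card B) : ℕ) * SW1 v πhat :=
    (card_mul_SWm_le_mul_SW1 (by omega) (sum_sum_V1_le_min_mul hv hB hS τ σ hπwel)).trans
      (by gcongr)
  have hSW : 0 ≤ SW1 v πhat := by rw [SW1]; positivity
  refine ⟨by rwa [← Nat.cast_min], le_of_mul_le_mul_left ?_ hS₀⟩
  exact hmain.trans (mul_le_mul_of_nonneg_right (by exact_mod_cast min_le_left _ _) hSW)

/-- against a welfare-best revenue-maximizing monopolist,
competition cannot increase welfare. -/
theorem competition_no_gain [Nonempty B] [Nonempty G] [Nonempty S]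
    (v : B → G → ℕ) (hv : ∀ b g, v b g ≤ 1)
    (hB : 2 ≤ Fintype.card B) (hS : 2 ≤ Fintype.card S)
    (πhat : Finpartition (univ : Finset G))
    (hmax : ∀ π' : Finpartition (univ : Finset G), rev1 v π' ≤ rev1 v πhat)
    (hbest : ∀ π' : Finpartition (univ : Finset G),
        (∀ π'' : Finpartition (univ : Finset G), rev1 v π'' ≤ rev1 v π') →
        SW1 v π' ≤ SW1 v πhat)
    (τ : S → Finpartition (univ : Finset G)) (σ : B → S) :
    (Fintype.card S : ℚ) * SWm v τ σ ≤
        (min (Fintype.card S) (Fintype.card B) : ℚ) * SW1 v πhat ∧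
      SWm v τ σ ≤ SW1 v πhat :=
  competition_no_gain_general v hv hB hS πhat hbest τ σ
end

section
/- Suppose |S| ≥ 2, |B| ≥ |S|, and every buyer has positive demand, i.e. v_b(G) ≥ 1 for every b ∈ B. Then for every seller profile τ and every buyer assignment σ that is a Nash equilibrium for τ, SW(τ,σ) ≥ 1/|G|. -/
open Finset

variable {B G S : Type*} [Fintype B] [Fintype G] [Fintype S]
variable [DecidableEq B] [DecidableEq G] [DecidableEq S]

/-! If every seller has a buyer, each seller's welfare is at least the total value of one of
its buyers, hence at least `1`. Otherwise some seller `s₀` is idle, and moving to `s₀` lets any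
buyer purchase every bundle at price `V̄2 = 0`, i.e. collect its whole value `v_b(G)`. At a Nash
equilibrium each buyer therefore already pays nothing for every bundle it values, so on each
bundle at most one buyer of that seller has positive value; the seller's welfare is then the sum
of its buyers' values. Either way the total welfare is at least `|S|` (using `|B| ≥ |S|`). -/

section

-- Fresh type variables, so that each lemma carries only the instances it uses.
variable {B G S : Type*}

@[simp]
lemma mem_buyersOf [Fintype B] [DecidableEq S] {σ : B → S} {s : S} {b : B} :
    b ∈ buyersOf σ s ↔ σ b = s := by
  simp [buyersOf]

lemma sum_card_buyersOf [Fintype B] [Fintype S] [DecidableEq S] (σ : B → S) :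
    ∑ s, (buyersOf σ s).card = Fintype.card B :=
  (card_eq_sum_card_fiberwise fun b _ => mem_univ (σ b)).symm

lemma buyersOf_update_self_of_eq_empty [Fintype B] [DecidableEq B] [DecidableEq S]
    {σ : B → S} {s₀ : S} (hs₀ : buyersOf σ s₀ = ∅) (b : B) :
    buyersOf (Function.update σ b s₀) s₀ = {b} := by
  ext b'
  rcases eq_or_ne b' b with rfl | hb'
  · simp
  · simpa [hb', Function.update_of_ne] using fun h : σ b' = s₀ =>
      (eq_empty_iff_forall_notMem.mp hs₀ b') (mem_buyersOf.mpr h)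

lemma sum_vsum_parts [DecidableEq G] (v : B → G → ℕ) (b : B) {Gb : Finset G}
    (π : Finpartition Gb) :
    ∑ Gb' ∈ π.parts, vsum v b Gb' = vsum v b Gb := by
  unfold vsum
  conv_rhs => rw [← π.biUnion_parts, sum_biUnion π.supIndep.pairwiseDisjoint]
  rfl

lemma V2_singleton [DecidableEq B] (v : B → G → ℕ) (b : B) (Gb : Finset G) :
    V2 v {b} Gb = 0 := by
  simp [V2, V1]

lemma sum_vsum_le_V1_of_V2_eq_zero [DecidableEq B] {v : B → G → ℕ} {Bb : Finset B}
    {Gb : Finset G} (h : V2 v Bb Gb = 0) : ∑ b ∈ Bb, vsum v b Gb ≤ V1 v Bb Gb := by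
  rcases Bb.eq_empty_or_nonempty with rfl | hne
  · simp
  rw [V2, dif_pos hne] at h
  obtain ⟨b₀, hb₀, hmin⟩ := exists_mem_eq_inf' hne fun b => V1 v (Bb.erase b) Gb
  have hrest : ∀ b ∈ Bb.erase b₀, vsum v b Gb = 0 :=
    (Finset.sup_eq_bot_iff _ _).mp (hmin.symm.trans h)
  rw [← add_sum_erase _ _ hb₀, sum_eq_zero hrest, add_zero]
  exact le_sup (f := fun b => vsum v b Gb) hb₀

section Welfare

variable [Fintype B] [Fintype G] [DecidableEq G] [DecidableEq S]

def sellerWelfare (v : B → G → ℕ) (τ : S → Finpartition (univ : Finset G)) (σ : B → S)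
    (s : S) : ℕ :=
  ∑ Gb ∈ (τ s).parts, V1 v (buyersOf σ s) Gb

lemma SWm_eq_sum_sellerWelfare [Fintype S] (v : B → G → ℕ)
    (τ : S → Finpartition (univ : Finset G)) (σ : B → S) :
    SWm v τ σ =
      ((Fintype.card S : ℚ) * Fintype.card G)⁻¹ * ∑ s, (sellerWelfare v τ σ s : ℚ) := by
  simp [SWm, sellerWelfare]

lemma vsum_le_sellerWelfare (v : B → G → ℕ) (τ : S → Finpartition (univ : Finset G))
    {σ : B → S} {b : B} {s : S} (hb : σ b = s) :
    vsum v b univ ≤ sellerWelfare v τ σ s := by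
  rw [← sum_vsum_parts v b (τ s)]
  exact sum_le_sum fun Gb _ => le_sup (f := fun b => vsum v b Gb) (mem_buyersOf.mpr hb)

section Nash

variable [DecidableEq B]

lemma ubuyer_update_of_eq_empty (v : B → G → ℕ) (τ : S → Finpartition (univ : Finset G))
    {σ : B → S} {s₀ : S} (hs₀ : buyersOf σ s₀ = ∅) (b : B) :
    ubuyer v τ (Function.update σ b s₀) b = (Fintype.card G : ℚ)⁻¹ * vsum v b univ := by
  rw [ubuyer, Function.update_self, buyersOf_update_self_of_eq_empty hs₀,
    ← sum_vsum_parts v b (τ s₀), Nat.cast_sum]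
  simp [V2_singleton]

lemma IsNash.V2_eq_zero {v : B → G → ℕ} {τ : S → Finpartition (univ : Finset G)}
    {σ : B → S} (hσ : IsNash v τ σ) {s₀ : S} (hs₀ : buyersOf σ s₀ = ∅) {b : B}
    {Gb : Finset G} (hGb : Gb ∈ (τ (σ b)).parts) (hpos : 0 < vsum v b Gb) :
    V2 v (buyersOf σ (σ b)) Gb = 0 := by
  set f : Finset G → ℚ := fun t => max ((vsum v b t : ℚ) - V2 v (buyersOf σ (σ b)) t) 0
  have hGpos : (0 : ℚ) < (Fintype.card G : ℚ)⁻¹ := by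
    obtain ⟨g, -⟩ := nonempty_of_sum_ne_zero hpos.ne'
    have : Nonempty G := ⟨g⟩
    positivity
  have hle : ∀ t ∈ (τ (σ b)).parts, f t ≤ vsum v b t := fun _ _ =>
    max_le (by simp) (by positivity)
  have hsum :
      ∑ t ∈ (τ (σ b)).parts, (vsum v b t : ℚ) ≤ ∑ t ∈ (τ (σ b)).parts, f t := by
    have := (ubuyer_update_of_eq_empty v τ hs₀ b).symm.trans_le (hσ b s₀)
    rwa [ubuyer, ← sum_vsum_parts v b (τ (σ b)), Nat.cast_sum,
      mul_le_mul_iff_right₀ hGpos] at this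
  have hfGb : f Gb = vsum v b Gb :=
    (sum_eq_sum_iff_of_le hle).mp ((sum_le_sum hle).antisymm hsum) Gb hGb
  by_contra hV2
  have hpos' : (0 : ℚ) < vsum v b Gb := by exact_mod_cast hpos
  have hV2pos : (0 : ℚ) < V2 v (buyersOf σ (σ b)) Gb := by
    exact_mod_cast Nat.pos_of_ne_zero hV2
  exact (max_lt (by linarith) hpos').ne hfGb

lemma IsNash.sum_vsum_le_sellerWelfare {v : B → G → ℕ}
    {τ : S → Finpartition (univ : Finset G)} {σ : B → S} (hσ : IsNash v τ σ) {s₀ : S}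
    (hs₀ : buyersOf σ s₀ = ∅) (s : S) :
    ∑ b ∈ buyersOf σ s, vsum v b univ ≤ sellerWelfare v τ σ s := by
  have hpart : ∀ Gb ∈ (τ s).parts,
      ∑ b ∈ buyersOf σ s, vsum v b Gb ≤ V1 v (buyersOf σ s) Gb := by
    intro Gb hGb
    by_cases hvalued : ∃ b ∈ buyersOf σ s, 0 < vsum v b Gb
    · obtain ⟨b, hb, hpos⟩ := hvalued
      rw [mem_buyersOf] at hb
      subst hb
      exact sum_vsum_le_V1_of_V2_eq_zero (hσ.V2_eq_zero hs₀ hGb hpos)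
    · push Not at hvalued
      rw [sum_eq_zero fun b hb => Nat.le_zero.mp (hvalued b hb)]
      exact Nat.zero_le _
  calc ∑ b ∈ buyersOf σ s, vsum v b univ
      = ∑ b ∈ buyersOf σ s, ∑ Gb ∈ (τ s).parts, vsum v b Gb :=
        sum_congr rfl fun b _ => (sum_vsum_parts v b (τ s)).symm
    _ = ∑ Gb ∈ (τ s).parts, ∑ b ∈ buyersOf σ s, vsum v b Gb := sum_comm
    _ ≤ sellerWelfare v τ σ s := sum_le_sum hpart

lemma IsNash.card_le_sum_sellerWelfare [Fintype S] {v : B → G → ℕ}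
    {τ : S → Finpartition (univ : Finset G)} {σ : B → S} (hσ : IsNash v τ σ)
    (hB : Fintype.card S ≤ Fintype.card B)
    (hdem : ∀ b : B, 1 ≤ vsum v b univ) :
    Fintype.card S ≤ ∑ s, sellerWelfare v τ σ s := by
  by_cases hbusy : ∀ s, (buyersOf σ s).Nonempty
  · calc Fintype.card S = ∑ _s : S, 1 := by simp
      _ ≤ ∑ s, sellerWelfare v τ σ s := sum_le_sum fun s _ => by
        obtain ⟨b, hb⟩ := hbusy s
        exact (hdem b).trans (vsum_le_sellerWelfare v τ (mem_buyersOf.mp hb))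
  · push Not at hbusy
    obtain ⟨s₀, hs₀⟩ := hbusy
    calc Fintype.card S ≤ Fintype.card B := hB
      _ = ∑ s, ∑ _b ∈ buyersOf σ s, 1 := by simp [sum_card_buyersOf]
      _ ≤ ∑ s, ∑ b ∈ buyersOf σ s, vsum v b univ := by gcongr with s _ b; exact hdem b
      _ ≤ ∑ s, sellerWelfare v τ σ s :=
        sum_le_sum fun s _ => hσ.sum_vsum_le_sellerWelfare hs₀ s

end Nash

end Welfare

end

theorem nash_sw_ge_inv_G_general [Nonempty S]
    (v : B → G → ℕ)
    (hB : Fintype.card S ≤ Fintype.card B)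
    (hdem : ∀ b : B, 1 ≤ vsum v b (univ : Finset G))
    (τ : S → Finpartition (univ : Finset G)) (σ : B → S) (hσ : IsNash v τ σ) :
    (Fintype.card G : ℚ)⁻¹ ≤ SWm v τ σ := by
  have hcardS : (Fintype.card S : ℚ) ≠ 0 := by exact_mod_cast Fintype.card_ne_zero
  have hwelfare : (Fintype.card S : ℚ) ≤ ∑ s, (sellerWelfare v τ σ s : ℚ) := by
    exact_mod_cast hσ.card_le_sum_sellerWelfare hB hdem
  calc (Fintype.card G : ℚ)⁻¹
      = ((Fintype.card S : ℚ) * Fintype.card G)⁻¹ * Fintype.card S := by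
        rw [mul_inv_rev, mul_assoc, inv_mul_cancel₀ hcardS, mul_one]
    _ ≤ SWm v τ σ := by
        rw [SWm_eq_sum_sellerWelfare]
        gcongr

/-- with at least two sellers, at least as many buyers as
sellers, and positive demand for each buyer, every equilibrium has social
welfare at least `1/|G|`. -/
theorem nash_sw_ge_inv_G [Nonempty B] [Nonempty G] [Nonempty S]
    (v : B → G → ℕ) (hv : ∀ b g, v b g ≤ 1)
    (hS : 2 ≤ Fintype.card S) (hB : Fintype.card S ≤ Fintype.card B)
    (hdem : ∀ b : B, 1 ≤ vsum v b (univ : Finset G))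
    (τ : S → Finpartition (univ : Finset G)) (σ : B → S) (hσ : IsNash v τ σ) :
    (Fintype.card G : ℚ)⁻¹ ≤ SWm v τ σ :=
  nash_sw_ge_inv_G_general v hB hdem τ σ hσ
end
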